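/- Let X_1, …, X_R be independent random variables with continuous distribution functions F_1, …, F_R, all bounded above by a common Gumbel-type bound. If for normalizing constants a_R > 0, b_R we have Π_{r=1}^R F_r(a_R γ + b_R) → exp(-exp(-γ)) pointwise, then for every positive integer k, P((X_{(R-k+1:R)} - b_R)/a_R ≤ γ) → Σ_{r=0}^{k-1} (exp(-γ))^r/r! · exp(-exp(-γ)), where X_{(R-k+1:R)} denotes the k-th largest order statistic, provided max_r (1 - F_r(a_R γ + b_R)) → 0. -/

import Mathlib

open Real Filter Finset MeasureTheory ProbabilityTheory

open scoped Topology Nat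

/-!
`X_{(R-k+1:R)} ≤ t_R`, with `t_R = a_R γ + b_R`, means that fewer than `k` of the `X_r` exceed
`t_R`, and by independence the number of exceedances is a sum of independent Bernoulli variables
with success probabilities `p_r = 1 - F_r(t_R)`. In terms of the odds `x_r = p_r / (1 - p_r)`, the
probability of exactly `j` exceedances is `e_j(x) ∏ (1 - p_r)`, with `e_j` the `j`-th elementary
symmetric function. The hypothesis says `∑ log (1 + x_r) = -log ∏ (1 - p_r) → e^{-γ}`, and as the
`x_r` are uniformly small this forces `∑ x_r → e^{-γ}`. Finally the identity
`(j + 1) e_{j+1} = e_1 e_j - ∑_{|T| = j} (∑_{r ∈ T} x_r) ∏_{r ∈ T} x_r`, whose last term is at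
most `j (max x_r) e_j`, gives `e_j(x) → e^{-jγ} / j!` by induction: the exceedance count is
asymptotically Poisson with mean `e^{-γ}`.
-/

theorem Real.sub_log_one_add_le_mul_log_one_add {y δ : ℝ} (hy : 0 ≤ y) (hyδ : y ≤ δ) :
    y - log (1 + y) ≤ δ * log (1 + y) := by
  have hpos : 0 < 1 + y := by linarith
  have hlog : 0 ≤ log (1 + y) := log_nonneg (by linarith)
  have hlow : y ≤ (1 + y) * log (1 + y) := by
    have hinv := one_sub_inv_le_log_of_pos hpos
    have hy_eq : (1 + y) * (1 - (1 + y)⁻¹) = y := by field_simp; ring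
    nlinarith
  nlinarith

theorem tendsto_zero_of_nonneg_of_forall_le_mul {α : Type*} {L : Filter α} {f g : α → ℝ} {l : ℝ}
    (hg : Tendsto g L (𝓝 l)) (hf0 : ∀ᶠ a in L, 0 ≤ f a)
    (hfg : ∀ δ > 0, ∀ᶠ a in L, f a ≤ δ * g a) : Tendsto f L (𝓝 0) := by
  rw [tendsto_order]
  refine ⟨fun ε hε => hf0.mono fun a ha => hε.trans_le ha, fun ε hε => ?_⟩
  have hB : 0 < |l| + 1 := by positivity
  filter_upwards [hfg (ε / (|l| + 1)) (by positivity),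
    hg.eventually (gt_mem_nhds ((le_abs_self l).trans_lt (lt_add_one |l|)))] with a hfa hga
  calc f a ≤ ε / (|l| + 1) * g a := hfa
    _ < ε / (|l| + 1) * (|l| + 1) := by gcongr
    _ = ε := by field_simp

namespace Finset

variable {ι : Type*} [DecidableEq ι]

theorem sum_powersetCard_sum_sdiff_insert {M : Type*} [AddCommMonoid M] (s : Finset ι)
    (f : Finset ι → M) (j : ℕ) :
    ∑ T ∈ powersetCard j s, ∑ r ∈ s \ T, f (insert r T)
      = (j + 1) • ∑ U ∈ powersetCard (j + 1) s, f U := by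
  have hcard : ∀ U ∈ powersetCard (j + 1) s, ∑ _r ∈ U, f U = (j + 1) • f U := fun U hU => by
    rw [sum_const, (mem_powersetCard.1 hU).2]
  rw [smul_sum, ← sum_congr rfl hcard, sum_sigma', sum_sigma']
  refine sum_nbij' (fun p => ⟨insert p.2 p.1, p.2⟩) (fun p => ⟨p.1.erase p.2, p.2⟩)
    ?_ ?_ ?_ ?_ fun _ _ => rfl
  · rintro ⟨T, r⟩ hp
    simp only [mem_sigma, mem_powersetCard, mem_sdiff] at hp ⊢
    exact ⟨⟨insert_subset hp.2.1 hp.1.1, by rw [card_insert_of_notMem hp.2.2, hp.1.2]⟩,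
      mem_insert_self _ _⟩
  · rintro ⟨U, r⟩ hp
    simp only [mem_sigma, mem_powersetCard, mem_sdiff] at hp ⊢
    exact ⟨⟨(erase_subset _ _).trans hp.1.1, by rw [card_erase_of_mem hp.2, hp.1.2]; rfl⟩,
      hp.1.1 hp.2, notMem_erase _ _⟩
  · rintro ⟨T, r⟩ hp
    simp only [mem_sigma, mem_powersetCard, mem_sdiff] at hp
    simp [erase_insert hp.2.2]
  · rintro ⟨U, r⟩ hp
    simp only [mem_sigma] at hp
    simp [insert_erase hp.2]

theorem sum_mul_sum_powersetCard_prod {R : Type*} [CommSemiring R] (s : Finset ι) (x : ι → R)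
    (j : ℕ) :
    (∑ r ∈ s, x r) * ∑ T ∈ powersetCard j s, ∏ r ∈ T, x r
      = (j + 1) * ∑ U ∈ powersetCard (j + 1) s, ∏ r ∈ U, x r
        + ∑ T ∈ powersetCard j s, (∑ r ∈ T, x r) * ∏ r ∈ T, x r := by
  have hsplit : ∀ T ∈ powersetCard j s, (∑ r ∈ s, x r) * ∏ r ∈ T, x r
      = ∑ r ∈ s \ T, ∏ t ∈ insert r T, x t + (∑ r ∈ T, x r) * ∏ r ∈ T, x r := fun T hT => by
    rw [← sum_sdiff (mem_powersetCard.1 hT).1, add_mul, sum_mul]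
    congr 1
    exact sum_congr rfl fun r hr => (prod_insert (mem_sdiff.1 hr).2).symm
  rw [mul_sum, sum_congr rfl hsplit, sum_add_distrib,
    sum_powersetCard_sum_sdiff_insert s fun U => ∏ t ∈ U, x t, nsmul_eq_mul]
  push_cast
  rfl

end Finset

section TriangularArray

variable {α ι : Type*} {L : Filter α} {s : α → Finset ι} {x : α → ι → ℝ}

theorem tendsto_sum_of_tendsto_sum_log_one_add {l : ℝ}
    (hx0 : ∀ᶠ a in L, ∀ r ∈ s a, 0 ≤ x a r) (hsmall : ∀ ε > 0, ∀ᶠ a in L, ∀ r ∈ s a, x a r < ε)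
    (hlog : Tendsto (fun a => ∑ r ∈ s a, log (1 + x a r)) L (𝓝 l)) :
    Tendsto (fun a => ∑ r ∈ s a, x a r) L (𝓝 l) := by
  have hgap : Tendsto (fun a => ∑ r ∈ s a, (x a r - log (1 + x a r))) L (𝓝 0) := by
    refine tendsto_zero_of_nonneg_of_forall_le_mul hlog ?_ fun δ hδ => ?_
    · filter_upwards [hx0] with a ha
      refine sum_nonneg fun r hr => sub_nonneg.2 ?_
      linarith [log_le_sub_one_of_pos (show 0 < 1 + x a r by linarith [ha r hr])]
    · filter_upwards [hx0, hsmall δ hδ] with a ha hδa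
      rw [mul_sum]
      exact sum_le_sum fun r hr =>
        sub_log_one_add_le_mul_log_one_add (ha r hr) (hδa r hr).le
  simpa using hlog.add hgap

theorem tendsto_sum_powersetCard_prod {l : ℝ}
    (hx0 : ∀ᶠ a in L, ∀ r ∈ s a, 0 ≤ x a r) (hsmall : ∀ ε > 0, ∀ᶠ a in L, ∀ r ∈ s a, x a r < ε)
    (hsum : Tendsto (fun a => ∑ r ∈ s a, x a r) L (𝓝 l)) (j : ℕ) :
    Tendsto (fun a => ∑ T ∈ powersetCard j (s a), ∏ r ∈ T, x a r) L (𝓝 (l ^ j / j !)) := by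
  classical
  induction j with
  | zero => simpa using tendsto_const_nhds
  | succ j ih =>
    set D : α → ℝ := fun a => ∑ T ∈ powersetCard j (s a), (∑ r ∈ T, x a r) * ∏ r ∈ T, x a r
    have hD : Tendsto D L (𝓝 0) := by
      refine tendsto_zero_of_nonneg_of_forall_le_mul (ih.const_mul (j : ℝ)) ?_ fun δ hδ => ?_
      · filter_upwards [hx0] with a ha
        refine sum_nonneg fun T hT => ?_
        have hTs := (mem_powersetCard.1 hT).1
        exact mul_nonneg (sum_nonneg fun r hr => ha r (hTs hr))
          (prod_nonneg fun r hr => ha r (hTs hr))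
      · filter_upwards [hx0, hsmall δ hδ] with a ha hδa
        rw [← mul_assoc, mul_comm δ, mul_sum]
        refine sum_le_sum fun T hT => ?_
        obtain ⟨hTs, hTcard⟩ := mem_powersetCard.1 hT
        have hsumT : ∑ r ∈ T, x a r ≤ j * δ := by
          simpa [hTcard] using sum_le_sum fun r hr => (hδa r (hTs hr)).le
        exact mul_le_mul_of_nonneg_right hsumT (prod_nonneg fun r hr => ha r (hTs hr))
    have hrec : ∀ a, ∑ T ∈ powersetCard (j + 1) (s a), ∏ r ∈ T, x a r
        = ((∑ r ∈ s a, x a r) * ∑ T ∈ powersetCard j (s a), ∏ r ∈ T, x a r - D a) / (j + 1) :=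
      fun a => by
        rw [sum_mul_sum_powersetCard_prod]
        field_simp
        ring
    have hlim : (l * (l ^ j / j !) - 0) / (j + 1) = l ^ (j + 1) / (j + 1)! := by
      rw [Nat.factorial_succ]
      push_cast
      field_simp
      ring
    simpa only [hrec, hlim] using ((hsum.mul ih).sub hD).div_const ((j : ℝ) + 1)

end TriangularArray

section PoissonBinomial

variable {ι : Type*} [DecidableEq ι]

def poissonBinomial (s : Finset ι) (p : ι → ℝ) (j : ℕ) : ℝ :=
  ∑ S ∈ powersetCard j s, ∏ r ∈ s, if r ∈ S then p r else 1 - p r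

theorem poissonBinomial_eq_sum_mul_prod {s : Finset ι} {p : ι → ℝ} (hp : ∀ r ∈ s, p r ≠ 1)
    (j : ℕ) :
    poissonBinomial s p j
      = (∑ T ∈ powersetCard j s, ∏ r ∈ T, p r / (1 - p r)) * ∏ r ∈ s, (1 - p r) := by
  rw [poissonBinomial, sum_mul]
  refine sum_congr rfl fun S hS => ?_
  have hfactor : ∀ r ∈ s, (if r ∈ S then p r else 1 - p r)
      = (if r ∈ S then p r / (1 - p r) else 1) * (1 - p r) := fun r hr => by
    split_ifs
    · rw [div_mul_cancel₀ _ (sub_ne_zero.2 (hp r hr).symm)]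
    · rw [one_mul]
  rw [prod_congr rfl hfactor, prod_mul_distrib, prod_ite_mem,
    inter_eq_right.2 (mem_powersetCard.1 hS).1]

variable {α : Type*} {L : Filter α} {s : α → Finset ι} {p : α → ι → ℝ}

theorem tendsto_poissonBinomial {c : ℝ} (hp0 : ∀ᶠ a in L, ∀ r ∈ s a, 0 ≤ p a r)
    (hsmall : ∀ ε > 0, ∀ᶠ a in L, ∀ r ∈ s a, p a r < ε)
    (hprod : Tendsto (fun a => ∏ r ∈ s a, (1 - p a r)) L (𝓝 (exp (-c)))) (j : ℕ) :
    Tendsto (fun a => poissonBinomial (s a) (p a) j) L (𝓝 (c ^ j / j ! * exp (-c))) := by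
  set x : α → ι → ℝ := fun a r => p a r / (1 - p a r)
  have hhalf := hsmall (1 / 2) (by norm_num)
  have hx0 : ∀ᶠ a in L, ∀ r ∈ s a, 0 ≤ x a r := by
    filter_upwards [hp0, hhalf] with a h0 h1 r hr
    exact div_nonneg (h0 r hr) (by linarith [h1 r hr])
  have hxsmall : ∀ ε > 0, ∀ᶠ a in L, ∀ r ∈ s a, x a r < ε := fun ε hε => by
    filter_upwards [hhalf, hsmall (ε / 2) (by positivity)] with a h1 hε2 r hr
    rw [div_lt_iff₀ (by linarith [h1 r hr])]
    nlinarith [h1 r hr, hε2 r hr]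
  have hlog : Tendsto (fun a => ∑ r ∈ s a, log (1 + x a r)) L (𝓝 c) := by
    have hneglog := (hprod.log (exp_pos _).ne').neg
    rw [log_exp, neg_neg] at hneglog
    refine hneglog.congr' ?_
    filter_upwards [hhalf] with a h1
    have hq : ∀ r ∈ s a, 1 - p a r ≠ 0 := fun r hr => by linarith [h1 r hr]
    rw [log_prod hq, ← sum_neg_distrib]
    refine sum_congr rfl fun r hr => ?_
    have : 1 + x a r = (1 - p a r)⁻¹ := by
      simp only [x]
      field_simp [hq r hr]
      ring
    rw [this, log_inv]
  have hesymm := tendsto_sum_powersetCard_prod hx0 hxsmall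
    (tendsto_sum_of_tendsto_sum_log_one_add hx0 hxsmall hlog) j
  refine (hesymm.mul hprod).congr' ?_
  filter_upwards [hhalf] with a h1
  exact (poissonBinomial_eq_sum_mul_prod (fun r hr => by linarith [h1 r hr]) j).symm

end PoissonBinomial

section ExceedanceCount

variable {Ω ι : Type*} [DecidableEq ι] {X : ι → Ω → ℝ} {t : ℝ}
  {s S : Finset ι}

theorem setOf_filter_lt_eq (hS : S ⊆ s) :
    {ω | s.filter (fun r => t < X r ω) = S}
      = ⋂ r ∈ s, X r ⁻¹' (if r ∈ S then Set.Ioi t else Set.Iic t) := by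
  ext ω
  simp only [Set.mem_ofPred_eq, Set.mem_iInter, Set.mem_preimage, Finset.ext_iff, mem_filter]
  constructor
  · intro h r hr
    split_ifs with hrS
    · exact ((h r).2 hrS).2
    · exact not_lt.1 fun hlt => hrS ((h r).1 ⟨hr, hlt⟩)
  · intro h r
    by_cases hrS : r ∈ S
    · simpa [hrS, hS hrS] using h r (hS hrS)
    · refine iff_of_false (fun ⟨hr, hlt⟩ => ?_) hrS
      have hle := h r hr
      rw [if_neg hrS] at hle
      exact (not_lt.2 hle) hlt

variable [MeasurableSpace Ω]

theorem measurableSet_setOf_filter_lt_eq (hmeas : ∀ r, Measurable (X r)) (hS : S ⊆ s) :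
    MeasurableSet {ω | s.filter (fun r => t < X r ω) = S} := by
  rw [setOf_filter_lt_eq hS]
  exact Finset.measurableSet_biInter s fun r _ => hmeas r (by split_ifs <;> measurability)

variable {μ : Measure Ω} [IsProbabilityMeasure μ]

theorem measureReal_lt_eq_one_sub {Y : Ω → ℝ} (hY : Measurable Y) (t : ℝ) :
    μ.real {ω | t < Y ω} = 1 - μ.real {ω | Y ω ≤ t} := by
  rw [← probReal_compl_eq_one_sub (measurableSet_le hY measurable_const)]
  congr 1
  ext ω
  simp

theorem measureReal_setOf_filter_lt_eq (hmeas : ∀ r, Measurable (X r)) (hindep : iIndepFun X μ)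
    (hS : S ⊆ s) :
    μ.real {ω | s.filter (fun r => t < X r ω) = S}
      = ∏ r ∈ s, if r ∈ S then μ.real {ω | t < X r ω} else 1 - μ.real {ω | t < X r ω} := by
  rw [setOf_filter_lt_eq hS, measureReal_def,
    hindep.meas_biInter fun r _ => ⟨_, by split_ifs <;> measurability, rfl⟩,
    ENNReal.toReal_prod]
  refine prod_congr rfl fun r _ => ?_
  split_ifs
  · rfl
  · rw [measureReal_lt_eq_one_sub (hmeas r), sub_sub_cancel, measureReal_def]
    rfl

theorem measureReal_card_filter_lt_eq_poissonBinomial (hmeas : ∀ r, Measurable (X r))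
    (hindep : iIndepFun X μ) (j : ℕ) :
    μ.real {ω | #(s.filter (fun r => t < X r ω)) = j}
      = poissonBinomial s (fun r => μ.real {ω | t < X r ω}) j := by
  set N : Ω → Finset ι := fun ω => s.filter (fun r => t < X r ω)
  have hfiber : ∀ S ∈ powersetCard j s, MeasurableSet (N ⁻¹' {S}) := fun S hS =>
    measurableSet_setOf_filter_lt_eq hmeas (mem_powersetCard.1 hS).1
  have hcard : {ω | #(N ω) = j} = N ⁻¹' ↑(powersetCard j s) := by
    ext ω
    simp [N, mem_powersetCard]
  rw [hcard, ← sum_measureReal_preimage_singleton _ hfiber, poissonBinomial]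
  exact sum_congr rfl fun S hS =>
    measureReal_setOf_filter_lt_eq hmeas hindep (mem_powersetCard.1 hS).1

theorem measureReal_card_filter_lt_lt_eq_sum (hmeas : ∀ r, Measurable (X r)) (k : ℕ) :
    μ.real {ω | #(s.filter (fun r => t < X r ω)) < k}
      = ∑ j ∈ range k, μ.real {ω | #(s.filter (fun r => t < X r ω)) = j} := by
  set M : Ω → ℕ := fun ω => #(s.filter (fun r => t < X r ω))
  have hfiber : ∀ j ∈ range k, MeasurableSet (M ⁻¹' {j}) := fun j _ => by
    have : M ⁻¹' {j} = ⋃ S ∈ powersetCard j s, {ω | s.filter (fun r => t < X r ω) = S} := by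
      ext ω
      simp [M, mem_powersetCard]
    rw [this]
    exact Finset.measurableSet_biUnion _ fun S hS =>
      measurableSet_setOf_filter_lt_eq hmeas (mem_powersetCard.1 hS).1
  calc μ.real {ω | M ω < k} = μ.real (M ⁻¹' ↑(range k)) := by congr 1; ext ω; simp
    _ = _ := (sum_measureReal_preimage_singleton _ hfiber).symm

end ExceedanceCount

theorem barakat_kth_order_statistic_general
    {Ω : Type*} [MeasurableSpace Ω] (μpr : Measure Ω) [IsProbabilityMeasure μpr]
    (X : ℕ → Ω → ℝ) (hmeas : ∀ r, Measurable (X r))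
    (hindep : iIndepFun (m := fun _ : ℕ => (inferInstance : MeasurableSpace ℝ)) X μpr)
    (F : ℕ → ℝ → ℝ)
    (hFcdf : ∀ r γ, μpr {ω | X r ω ≤ γ} = ENNReal.ofReal (F r γ))
    (a b : ℕ → ℝ) (γ : ℝ) (k : ℕ)
    (hprod : Filter.Tendsto
      (fun R => ∏ r ∈ Finset.range R, F r (a R * γ + b R))
      Filter.atTop (nhds (Real.exp (-Real.exp (-γ)))))
    (hmax : ∀ ε > (0 : ℝ), ∀ᶠ R in Filter.atTop,
      ∀ r ∈ Finset.range R, 1 - F r (a R * γ + b R) < ε) :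
    Filter.Tendsto
      (fun R => (μpr {ω | ((Finset.range R).filter
          (fun r => a R * γ + b R < X r ω)).card < k}).toReal)
      Filter.atTop
      (nhds ((∑ r ∈ Finset.range k, (Real.exp (-γ)) ^ r / (Nat.factorial r)) *
        Real.exp (-Real.exp (-γ)))) := by
  set p : ℕ → ℕ → ℝ := fun R r => μpr.real {ω | a R * γ + b R < X r ω}
  -- `ENNReal.ofReal` truncates negative values of `F r`, hence the `max`.
  have hcompl : ∀ R r, 1 - p R r = max (F r (a R * γ + b R)) 0 := fun R r => by
    rw [show p R r = _ from measureReal_lt_eq_one_sub (hmeas r) _, sub_sub_cancel,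
      measureReal_def, hFcdf, ENNReal.toReal_ofReal']
  have hsmall : ∀ ε > 0, ∀ᶠ R in atTop, ∀ r ∈ range R, p R r < ε := fun ε hε => by
    filter_upwards [hmax ε hε] with R hR r hr
    linarith [hR r hr, hcompl R r, le_max_left (F r (a R * γ + b R)) 0]
  have hprod_compl : Tendsto (fun R => ∏ r ∈ range R, (1 - p R r)) atTop
      (𝓝 (exp (-exp (-γ)))) := by
    refine hprod.congr' ?_
    filter_upwards [hmax 1 one_pos] with R hR
    exact prod_congr rfl fun r hr => by rw [hcompl, max_eq_left (by linarith [hR r hr])]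
  have hpoisson := tendsto_poissonBinomial (.of_forall fun R r _ => measureReal_nonneg)
    hsmall hprod_compl
  rw [sum_mul]
  refine (tendsto_finsetSum _ fun j _ => hpoisson j).congr fun R => ?_
  rw [← measureReal_def, measureReal_card_filter_lt_lt_eq_sum hmeas]
  exact sum_congr rfl fun j _ => (measureReal_card_filter_lt_eq_poissonBinomial hmeas hindep j).symm

theorem barakat_kth_order_statistic
    {Ω : Type*} [MeasurableSpace Ω] (μpr : Measure Ω) [IsProbabilityMeasure μpr]
    (X : ℕ → Ω → ℝ) (hmeas : ∀ r, Measurable (X r))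
    (hindep : iIndepFun (m := fun _ : ℕ => (inferInstance : MeasurableSpace ℝ)) X μpr)
    (F : ℕ → ℝ → ℝ)
    (hFcont : ∀ r, Continuous (F r))
    (hFcdf : ∀ r γ, μpr {ω | X r ω ≤ γ} = ENNReal.ofReal (F r γ))
    (a b : ℕ → ℝ) (ha : ∀ R, 0 < a R) (γ : ℝ) (k : ℕ) (hk : 1 ≤ k)
    (hprod : Filter.Tendsto
      (fun R => ∏ r ∈ Finset.range R, F r (a R * γ + b R))
      Filter.atTop (nhds (Real.exp (-Real.exp (-γ)))))
    (hmax : ∀ ε > (0 : ℝ), ∀ᶠ R in Filter.atTop,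
      ∀ r ∈ Finset.range R, 1 - F r (a R * γ + b R) < ε) :
    Filter.Tendsto
      (fun R => (μpr {ω | ((Finset.range R).filter
          (fun r => a R * γ + b R < X r ω)).card < k}).toReal)
      Filter.atTop
      (nhds ((∑ r ∈ Finset.range k, (Real.exp (-γ)) ^ r / (Nat.factorial r)) *
        Real.exp (-Real.exp (-γ)))) :=
  barakat_kth_order_statistic_general μpr X hmeas hindep F hFcdf a b γ k hprod hmax
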